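/- Let κ > 0, σ > 0, and q = (1+2κ)/(1+κ). Among all measurable probability densities p on [0, ∞) satisfying ∫₀^∞ p(x) dx = 1, 0 < ∫₀^∞ p(x)^q dx < ∞, and the independent-equals mean constraint (∫₀^∞ x·p(x)^q dx)/(∫₀^∞ p(x)^q dx) = σ, the coupled entropy H_κ(p) = (1/κ)·(−1 + (∫₀^∞ p(x)^q dx)^(−1)) is maximized by the coupled exponential density p*(x) = (1/σ)·(1 + κ·x/σ)^(−(1+κ)/κ), for which H_κ(p*) = 1 + ln_{κ/(1+κ)}(σ). -/

import Mathlib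

/-!
Write `p*` for the coupled exponential density and `w x = (1 + κ x / σ) / (1 + κ)`. The weight is
chosen so that `w · p*^(q-1)` is a constant `C`. Integrating the tangent-line inequality
`p^q ≥ p*^q + q p*^(q-1) (p - p*)` of the convex map `t ↦ t^q` against `w` gives
`∫ w p^q ≥ C ∫ p* + q C (∫ p - ∫ p*) = C`, and the independent-equals mean constraint says exactly
that `∫ w p^q = ∫ p^q`. A direct computation gives `∫ p*^q = C`, so `∫ p^q ≥ ∫ p*^q`, and `H_κ` is
decreasing in `∫ p^q`.
-/

open Real MeasureTheory Set Filter Topology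

theorem rpow_add_mul_rpow_sub_one_mul_sub_le {a b q : ℝ} (ha : 0 < a) (hb : 0 ≤ b)
    (hq : 1 ≤ q) : a ^ q + q * a ^ (q - 1) * (b - a) ≤ b ^ q := by
  have hbern := one_add_mul_self_le_rpow_one_add (s := b / a - 1)
    (by linarith [div_nonneg hb ha.le]) hq
  rw [add_sub_cancel, div_rpow hb ha.le] at hbern
  have haq : 0 < a ^ q := rpow_pos_of_pos ha q
  calc a ^ q + q * a ^ (q - 1) * (b - a) = a ^ q * (1 + q * (b / a - 1)) := by
        rw [rpow_sub_one ha.ne']; field_simp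
    _ ≤ a ^ q * (b ^ q / a ^ q) := by gcongr
    _ = b ^ q := by field_simp

section OneAddMulRpow

variable {b c : ℝ}

theorem hasDerivAt_one_add_mul_rpow_div (hc : 0 < c) (hb : b ≠ -1) {x : ℝ} (hx : 0 ≤ x) :
    HasDerivAt (fun t => (1 + c * t) ^ (b + 1) / (c * (b + 1))) ((1 + c * x) ^ b) x := by
  have hbase : HasDerivAt (fun t => 1 + c * t) c x := by
    simpa using ((hasDerivAt_id x).const_mul c).const_add 1
  have hpos : 0 < 1 + c * x := by positivity
  have hb1 : b + 1 ≠ 0 := fun h => hb (by linarith)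
  refine ((hbase.rpow_const (Or.inl hpos.ne')).div_const (c * (b + 1))).congr_deriv ?_
  rw [add_sub_cancel_right]
  field_simp

theorem tendsto_one_add_mul_rpow_atTop (hc : 0 < c) (hb : b < 0) :
    Tendsto (fun x => (1 + c * x) ^ b) atTop (𝓝 0) := by
  have hlin : Tendsto (fun x => 1 + c * x) atTop atTop :=
    tendsto_atTop_add_const_left _ _ (tendsto_id.const_mul_atTop hc)
  have := (tendsto_rpow_neg_atTop (y := -b) (by linarith)).comp hlin
  simpa only [neg_neg, Function.comp_def] using this

theorem integrableOn_Ioi_one_add_mul_rpow (hc : 0 < c) (hb : b < -1) :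
    IntegrableOn (fun x => (1 + c * x) ^ b) (Ioi 0) := by
  have htop := (tendsto_one_add_mul_rpow_atTop hc (b := b + 1) (by linarith)).div_const
    (c * (b + 1))
  rw [zero_div] at htop
  exact integrableOn_Ioi_deriv_of_nonneg' (fun x hx => hasDerivAt_one_add_mul_rpow_div hc hb.ne hx)
    (fun x hx => (rpow_pos_of_pos (by positivity [mem_Ioi.mp hx]) b).le) htop

theorem integral_Ioi_one_add_mul_rpow (hc : 0 < c) (hb : b < -1) :
    ∫ x in Ioi 0, (1 + c * x) ^ b = -1 / (c * (b + 1)) := by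
  have htop := (tendsto_one_add_mul_rpow_atTop hc (b := b + 1) (by linarith)).div_const
    (c * (b + 1))
  rw [zero_div] at htop
  rw [integral_Ioi_of_hasDerivAt_of_tendsto'
    (fun x hx => hasDerivAt_one_add_mul_rpow_div hc hb.ne hx)
    (integrableOn_Ioi_one_add_mul_rpow hc hb) htop]
  simp [neg_div]

end OneAddMulRpow

theorem mul_integral_le_integral_mul_rpow {α : Type*} [MeasurableSpace α] {μ : Measure α}
    {p g w : α → ℝ} {q C : ℝ} (hq : 1 ≤ q) (hC : 0 ≤ C) (hg : ∀ᵐ x ∂μ, 0 < g x)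
    (hp : ∀ᵐ x ∂μ, 0 ≤ p x) (hwg : ∀ᵐ x ∂μ, w x * g x ^ (q - 1) = C)
    (hpi : Integrable p μ) (hgi : Integrable g μ) (hwp : Integrable (fun x => w x * p x ^ q) μ)
    (hpg : ∫ x, p x ∂μ = ∫ x, g x ∂μ) :
    C * ∫ x, g x ∂μ ≤ ∫ x, w x * p x ^ q ∂μ := by
  have htangent : ∀ᵐ x ∂μ, C * g x + q * C * (p x - g x) ≤ w x * p x ^ q := by
    filter_upwards [hg, hp, hwg] with x hgx hpx hwgx
    have hw : 0 ≤ w x := nonneg_of_mul_nonneg_left (hwgx ▸ hC) (rpow_pos_of_pos hgx _)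
    calc C * g x + q * C * (p x - g x)
        = w x * (g x ^ q + q * g x ^ (q - 1) * (p x - g x)) := by
          rw [← hwgx, rpow_sub_one hgx.ne']; field_simp
      _ ≤ w x * p x ^ q :=
          mul_le_mul_of_nonneg_left (rpow_add_mul_rpow_sub_one_mul_sub_le hgx hpx hq) hw
  have hdev : Integrable (fun x => q * C * (p x - g x)) μ := (hpi.sub hgi).const_mul _
  calc C * ∫ x, g x ∂μ = ∫ x, (C * g x + q * C * (p x - g x)) ∂μ := by
        rw [integral_add (hgi.const_mul C) hdev, integral_const_mul, integral_const_mul,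
          integral_sub hpi hgi, hpg, sub_self, mul_zero, add_zero]
    _ ≤ ∫ x, w x * p x ^ q ∂μ := integral_mono_ae ((hgi.const_mul C).add hdev) hwp htangent

section Escort

variable {s : Set ℝ} {f : ℝ → ℝ} {κ σ : ℝ}

theorem integrableOn_one_add_mul_div_mul (hf : IntegrableOn f s)
    (hxf : IntegrableOn (fun x => x * f x) s) :
    IntegrableOn (fun x => (1 + κ * x / σ) / (1 + κ) * f x) s :=
  ((hf.const_mul (1 + κ)⁻¹).add (hxf.const_mul (κ / σ / (1 + κ)))).congr
    (Eventually.of_forall fun x => by simp only [Pi.add_apply]; ring)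

theorem integral_one_add_mul_div_mul (hσ : σ ≠ 0) (hκ : 1 + κ ≠ 0) (hf : IntegrableOn f s)
    (hxf : IntegrableOn (fun x => x * f x) s)
    (hmean : ∫ x in s, x * f x = σ * ∫ x in s, f x) :
    ∫ x in s, (1 + κ * x / σ) / (1 + κ) * f x = ∫ x in s, f x := by
  have hsplit : (fun x => (1 + κ * x / σ) / (1 + κ) * f x)
      = fun x => (1 + κ)⁻¹ * f x + κ / σ / (1 + κ) * (x * f x) := by
    funext x; ring
  rw [hsplit, integral_add (hf.const_mul _) (hxf.const_mul _), integral_const_mul,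
    integral_const_mul, hmean]
  field_simp

end Escort

noncomputable def coupledExp (κ σ x : ℝ) : ℝ := 1 / σ * (1 + κ * x / σ) ^ (-(1 + κ) / κ)

section CoupledExp

variable {κ σ x : ℝ}

theorem one_add_mul_div_pos (hκ : 0 ≤ κ) (hσ : 0 < σ) (hx : 0 ≤ x) : 0 < 1 + κ * x / σ := by
  positivity

theorem coupledExp_pos (hκ : 0 ≤ κ) (hσ : 0 < σ) (hx : 0 ≤ x) : 0 < coupledExp κ σ x :=
  mul_pos (by positivity) (rpow_pos_of_pos (one_add_mul_div_pos hκ hσ hx) _)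

theorem coupledExp_rpow (hκ : 0 ≤ κ) (hσ : 0 < σ) (hx : 0 ≤ x) (r : ℝ) :
    coupledExp κ σ x ^ r = σ ^ (-r) * (1 + κ * x / σ) ^ (-(1 + κ) / κ * r) := by
  have hbase := one_add_mul_div_pos hκ hσ hx
  rw [coupledExp, mul_rpow (by positivity) (rpow_nonneg hbase.le _), ← rpow_mul hbase.le,
    one_div, inv_rpow hσ.le, rpow_neg hσ.le]

theorem integrableOn_coupledExp (hκ : 0 < κ) (hσ : 0 < σ) :
    IntegrableOn (coupledExp κ σ) (Ioi 0) := by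
  have hint := integrableOn_Ioi_one_add_mul_rpow (div_pos hκ hσ) (b := -(1 + κ) / κ)
    (by rw [div_lt_iff₀ hκ]; linarith)
  simp only [← mul_div_right_comm] at hint
  exact hint.const_mul (1 / σ)

theorem integral_coupledExp (hκ : 0 < κ) (hσ : 0 < σ) :
    ∫ x in Ioi 0, coupledExp κ σ x = 1 := by
  have hval := integral_Ioi_one_add_mul_rpow (div_pos hκ hσ) (b := -(1 + κ) / κ)
    (by rw [div_lt_iff₀ hκ]; linarith)
  simp only [← mul_div_right_comm] at hval
  simp only [coupledExp]
  rw [integral_const_mul, hval]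
  field_simp
  ring

theorem integral_coupledExp_rpow (hκ : 0 < κ) (hσ : 0 < σ) :
    ∫ x in Ioi 0, coupledExp κ σ x ^ ((1 + 2 * κ) / (1 + κ))
      = 1 / ((1 + κ) * σ ^ (κ / (1 + κ))) := by
  have hexp : -(1 + κ) / κ * ((1 + 2 * κ) / (1 + κ)) = -(1 + 2 * κ) / κ := by field_simp
  have hval := integral_Ioi_one_add_mul_rpow (div_pos hκ hσ) (b := -(1 + 2 * κ) / κ)
    (by rw [div_lt_iff₀ hκ]; linarith)
  simp only [← mul_div_right_comm] at hval
  rw [setIntegral_congr_fun measurableSet_Ioi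
      (fun x hx => coupledExp_rpow hκ.le hσ (le_of_lt hx) _),
    integral_const_mul, hexp, hval, rpow_neg hσ.le,
    show (1 + 2 * κ) / (1 + κ) = κ / (1 + κ) + 1 by rw [div_add_one (by positivity)]; ring_nf,
    rpow_add_one hσ.ne', show κ * (-(1 + 2 * κ) / κ + 1) = -(1 + κ) by field_simp; ring]
  field_simp

theorem mul_coupledExp_rpow (hκ : 0 < κ) (hσ : 0 < σ) (hx : 0 ≤ x) :
    (1 + κ * x / σ) / (1 + κ) * coupledExp κ σ x ^ (κ / (1 + κ))
      = 1 / ((1 + κ) * σ ^ (κ / (1 + κ))) := by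
  rw [coupledExp_rpow hκ.le hσ hx, show -(1 + κ) / κ * (κ / (1 + κ)) = -1 by field_simp,
    rpow_neg hσ.le, rpow_neg_one]
  field_simp

end CoupledExp

/-- Maximum coupled entropy principle: among all measurable probability densities
`p` on `[0,∞)` with `∫₀^∞ p = 1`, `0 < ∫₀^∞ p^q < ∞` (finiteness expressed as
integrability), and independent-equals mean `(∫₀^∞ x·p^q)/(∫₀^∞ p^q) = σ`, the
coupled entropy `H_κ(p) = (1/κ)·(−1 + (∫₀^∞ p^q)⁻¹)` with `q = (1+2κ)/(1+κ)` is
maximized by the coupled exponential density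
`p*(x) = (1/σ)·(1 + κ·x/σ)^(−(1+κ)/κ)`, for which
`H_κ(p*) = 1 + ln_{κ/(1+κ)}(σ) = 1 + ((1+κ)/κ)·(σ^(κ/(1+κ)) − 1)`. -/
theorem stmt_18 (κ σ : ℝ) (hκ : 0 < κ) (hσ : 0 < σ)
    (q : ℝ) (hq : q = (1 + 2 * κ) / (1 + κ)) :
    (∀ p : ℝ → ℝ, Measurable p → (∀ x ∈ Set.Ioi (0 : ℝ), 0 ≤ p x) →
      (∫ x in Set.Ioi (0 : ℝ), p x) = 1 →
      IntegrableOn (fun x => p x ^ q) (Set.Ioi (0 : ℝ)) →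
      0 < ∫ x in Set.Ioi (0 : ℝ), p x ^ q →
      (∫ x in Set.Ioi (0 : ℝ), x * p x ^ q) / (∫ x in Set.Ioi (0 : ℝ), p x ^ q) = σ →
      (1 / κ) * (-1 + (∫ x in Set.Ioi (0 : ℝ), p x ^ q)⁻¹)
        ≤ (1 / κ) * (-1 + (∫ x in Set.Ioi (0 : ℝ),
            ((1 / σ) * (1 + κ * x / σ) ^ (-(1 + κ) / κ)) ^ q)⁻¹))
    ∧ (1 / κ) * (-1 + (∫ x in Set.Ioi (0 : ℝ),
          ((1 / σ) * (1 + κ * x / σ) ^ (-(1 + κ) / κ)) ^ q)⁻¹)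
        = 1 + ((1 + κ) / κ) * (σ ^ (κ / (1 + κ)) - 1) := by
  have hq1 : 1 ≤ q := by rw [hq, le_div_iff₀ (by positivity)]; linarith
  have hC : ∫ x in Ioi 0, coupledExp κ σ x ^ q = 1 / ((1 + κ) * σ ^ (κ / (1 + κ))) := by
    rw [hq, integral_coupledExp_rpow hκ hσ]
  have hweight : ∀ x ∈ Ioi (0 : ℝ), (1 + κ * x / σ) / (1 + κ) * coupledExp κ σ x ^ (q - 1)
      = 1 / ((1 + κ) * σ ^ (κ / (1 + κ))) := fun x hx => by
    rw [show q - 1 = κ / (1 + κ) by rw [hq]; field_simp; ring]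
    exact mul_coupledExp_rpow hκ hσ (le_of_lt hx)
  change (∀ p : ℝ → ℝ, _ → _ → _ → _ → _ → _ →
      _ ≤ 1 / κ * (-1 + (∫ x in Ioi 0, coupledExp κ σ x ^ q)⁻¹)) ∧
    1 / κ * (-1 + (∫ x in Ioi 0, coupledExp κ σ x ^ q)⁻¹) = _
  rw [hC]
  refine ⟨fun p _ hp0 hp1 hpq hpos hmean => ?_, by field_simp; ring⟩
  have hpi : IntegrableOn p (Ioi 0) := integrable_of_integral_eq_one hp1
  have hxpi : IntegrableOn (fun x => x * p x ^ q) (Ioi 0) :=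
    .of_integral_ne_zero fun h => hσ.ne' (by rw [← hmean, h, zero_div])
  rw [div_eq_iff hpos.ne'] at hmean
  have hle := mul_integral_le_integral_mul_rpow (μ := volume.restrict (Ioi 0)) hq1
    (by positivity) (ae_restrict_of_forall_mem measurableSet_Ioi
      fun x hx => coupledExp_pos hκ.le hσ (le_of_lt hx))
    (ae_restrict_of_forall_mem measurableSet_Ioi hp0)
    (ae_restrict_of_forall_mem measurableSet_Ioi hweight)
    hpi (integrableOn_coupledExp hκ hσ) (integrableOn_one_add_mul_div_mul hpq hxpi)
    (by rw [hp1, integral_coupledExp hκ hσ])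
  rw [integral_coupledExp hκ hσ, mul_one,
    integral_one_add_mul_div_mul hσ.ne' (by positivity) hpq hxpi hmean] at hle
  gcongr
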